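/- arXiv:1312.2469 — 5 statements merged into one kernel-verified Lean document; each statement's English description precedes it below -/
import Mathlib

section
/- Let f be an invertible element of the Banach algebra ℓ¹(Γ, ℝ) with f ∈ ℤ[Γ]. Then the left ideal ℤ[Γ]·f contains a lopsided element, i.e., there exists h ∈ ℤ[Γ] such that hf is lopsided. -/
/-!
Approximate the left inverse `w` of `f` in `ℓ¹` by `h / q`, with `h ∈ ℤ[Γ]` and `q` a positive
integer such that `‖h - q w‖₁ < q / (‖f‖₁ + 1)`. Then `h f - q δ₁ = (h - q w) f` has `ℓ¹`-norm
less than `q` by Young's inequality, so the coefficient of `h f` at `1` dominates the sum of the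
absolute values of all the others.
-/

open scoped BigOperators

/-- Convolution of two real-valued functions on a group. -/
noncomputable def conv {Γ : Type*} [Group Γ] (f w : Γ → ℝ) : Γ → ℝ :=
  fun γ => ∑' δ : Γ, f δ * w (δ⁻¹ * γ)

/-- The identity element of the convolution algebra: the point mass at `1`. -/
noncomputable def deltaOne {Γ : Type*} [Group Γ] [DecidableEq Γ] : Γ → ℝ :=
  fun γ => if γ = 1 then 1 else 0

/-- An element of a group ring is lopsided if one coefficient dominates the sum of the
absolute values of all the others. -/
def Lopsided {Γ : Type*} [Group Γ] [DecidableEq Γ] (g : MonoidAlgebra ℤ Γ) : Prop :=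
  ∃ γ₀ : Γ, ∑ γ ∈ g.coeff.support.erase γ₀, |g.coeff γ| < |g.coeff γ₀|

open Finset

lemma summable_abs_intCast_finsupp {α : Type*} (h : α →₀ ℤ) : Summable fun a => |(h a : ℝ)| :=
  summable_of_ne_finset_zero (s := h.support) fun a ha => by simp [Finsupp.notMem_support_iff.1 ha]

lemma exists_finsupp_int_tsum_abs_sub_lt {α : Type*} {w : α → ℝ} (hw : Summable w) {ε : ℝ}
    (hε : 0 < ε) : ∃ (q : ℕ) (h : α →₀ ℤ), 0 < q ∧ Summable (fun a => |(h a : ℝ) - q * w a|) ∧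
      ∑' a, |(h a : ℝ) - q * w a| < q * ε := by
  classical
  obtain ⟨S, hS⟩ : ∃ S : Finset α, ∑' a : {x // x ∉ S}, |w a| < ε / 2 :=
    ((tendsto_order.1 (tendsto_tsum_compl_atTop_zero fun a => |w a|)).2 _ (half_pos hε)).exists
  -- large enough that the rounding errors on `S`, at most `#S / 2`, stay below `q * ε / 2`
  set q : ℕ := ⌈#S / ε⌉₊ + 1
  have hq : (#S : ℝ) < q * ε := by
    rw [← div_lt_iff₀ hε]
    exact (Nat.le_ceil _).trans_lt (by norm_num [q])
  set h : α →₀ ℤ := Finsupp.indicator S fun a _ => round (q * w a)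
  have hsum : Summable fun a => |(h a : ℝ) - q * w a| :=
    ((summable_abs_intCast_finsupp h).add (hw.abs.mul_left (q : ℝ))).of_nonneg_of_le
      (fun _ => abs_nonneg _) fun a => by
        simpa [abs_mul] using abs_sub (h a : ℝ) (q * w a)
  refine ⟨q, h, Nat.succ_pos _, hsum, ?_⟩
  have hin : ∑ a ∈ S, |(h a : ℝ) - q * w a| ≤ #S / 2 :=
    calc ∑ a ∈ S, |(h a : ℝ) - q * w a| = ∑ a ∈ S, |q * w a - round (q * w a)| :=
          sum_congr rfl fun a ha => by simp [h, Finsupp.indicator_apply, ha, abs_sub_comm]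
      _ ≤ #S • (1 / 2 : ℝ) := sum_le_card_nsmul S _ _ fun a _ => abs_sub_round _
      _ = #S / 2 := by rw [nsmul_eq_mul]; ring
  have hout : ∑' a : {x // x ∉ S}, |(h a : ℝ) - q * w a| = q * ∑' a : {x // x ∉ S}, |w a| := by
    rw [← tsum_mul_left]
    refine tsum_congr fun a => ?_
    simp [h, Finsupp.indicator_apply, a.2, abs_mul]
  have htail : (q : ℝ) * ∑' a : {x // x ∉ S}, |w a| < q * (ε / 2) :=
    mul_lt_mul_of_pos_left hS (Nat.cast_pos.2 (Nat.succ_pos _))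
  rw [← hsum.sum_add_tsum_subtype_compl S, hout]
  linarith

section Convolution

variable {Γ : Type*} [Group Γ]

lemma summable_abs_mul_translate {e f : Γ → ℝ} (he : Summable fun δ => |e δ|)
    (hf : Summable fun x => |f x|) (γ : Γ) : Summable fun δ => |e δ * f (δ⁻¹ * γ)| :=
  (he.mul_right _).of_nonneg_of_le (fun _ => abs_nonneg _) fun δ => by
    rw [abs_mul]
    exact mul_le_mul_of_nonneg_left (hf.le_tsum _ fun _ _ => abs_nonneg _) (abs_nonneg _)

lemma conv_sub_left {a b f : Γ → ℝ} (ha : Summable fun δ => |a δ|) (hb : Summable fun δ => |b δ|)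
    (hf : Summable fun x => |f x|) : conv (a - b) f = conv a f - conv b f := by
  funext γ
  simp only [conv, Pi.sub_apply, sub_mul]
  exact (summable_abs_mul_translate ha hf γ).of_abs.tsum_sub
    (summable_abs_mul_translate hb hf γ).of_abs

lemma conv_smul_left (c : ℝ) (a f : Γ → ℝ) : conv (c • a) f = c • conv a f := by
  funext γ
  simp only [conv, Pi.smul_apply, smul_eq_mul, mul_assoc, tsum_mul_left]

lemma sum_abs_conv_le {e f : Γ → ℝ} (he : Summable fun δ => |e δ|)
    (hf : Summable fun x => |f x|) (T : Finset Γ) :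
    ∑ γ ∈ T, |conv e f γ| ≤ (∑' δ, |e δ|) * ∑' x, |f x| := by
  have htranslate (δ : Γ) : ∑ γ ∈ T, |f (δ⁻¹ * γ)| ≤ ∑' x, |f x| := by
    rw [← (Equiv.mulLeft δ⁻¹).tsum_eq fun x => |f x|]
    exact ((Equiv.mulLeft δ⁻¹).summable_iff.2 hf).sum_le_tsum T fun _ _ => abs_nonneg _
  calc ∑ γ ∈ T, |conv e f γ| ≤ ∑ γ ∈ T, ∑' δ, |e δ * f (δ⁻¹ * γ)| :=
        sum_le_sum fun γ _ =>
          norm_tsum_le_tsum_norm (f := fun δ => e δ * f (δ⁻¹ * γ))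
            (summable_abs_mul_translate he hf γ)
    _ = ∑' δ, |e δ| * ∑ γ ∈ T, |f (δ⁻¹ * γ)| := by
        rw [← Summable.tsum_finsetSum fun γ _ => summable_abs_mul_translate he hf γ]
        simp only [abs_mul, mul_sum]
    _ ≤ ∑' δ, |e δ| * ∑' x, |f x| := by
        refine Summable.tsum_le_tsum (fun δ => mul_le_mul_of_nonneg_left (htranslate δ)
          (abs_nonneg _)) ?_ (he.mul_right _)
        exact (he.mul_right _).of_nonneg_of_le (fun _ => by positivity)
          fun δ => mul_le_mul_of_nonneg_left (htranslate δ) (abs_nonneg _)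
    _ = (∑' δ, |e δ|) * ∑' x, |f x| := tsum_mul_right

lemma intCast_coeff_mul_eq_conv (h f : MonoidAlgebra ℤ Γ) :
    (fun γ => ((h * f).coeff γ : ℝ)) =
      conv (fun γ => (h.coeff γ : ℝ)) (fun γ => (f.coeff γ : ℝ)) := by
  funext γ
  rw [MonoidAlgebra.coeff_mul_apply_left, Finsupp.sum, conv, tsum_eq_sum (s := h.coeff.support)]
  · push_cast; rfl
  · intro δ hδ
    simp [Finsupp.notMem_support_iff.1 hδ]

lemma lopsided_of_sum_abs_sub_smul_deltaOne_lt [DecidableEq Γ] (g : MonoidAlgebra ℤ Γ) (q : ℝ)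
    (hg : ∀ T : Finset Γ, ∑ γ ∈ T, |(g.coeff γ : ℝ) - q * deltaOne γ| < q) : Lopsided g := by
  refine ⟨1, ?_⟩
  have hT := hg (insert 1 (g.coeff.support.erase 1))
  rw [sum_insert (notMem_erase _ _), sum_congr rfl fun γ hγ => by
    rw [deltaOne, if_neg (ne_of_mem_erase hγ), mul_zero, sub_zero]] at hT
  simp only [deltaOne, if_true, mul_one] at hT
  have := abs_sub_abs_le_abs_sub q (g.coeff 1 : ℝ)
  rw [abs_sub_comm] at this
  exact_mod_cast (by linarith [le_abs_self q] :
    ∑ γ ∈ g.coeff.support.erase 1, |(g.coeff γ : ℝ)| < |(g.coeff 1 : ℝ)|)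

end Convolution

theorem exists_lopsided_of_invertible_general {Γ : Type*} [Group Γ]
    [DecidableEq Γ] (f : MonoidAlgebra ℤ Γ)
    (hinv : ∃ w : Γ → ℝ, Summable w ∧
      conv (fun γ => (f.coeff γ : ℝ)) w = deltaOne ∧
      conv w (fun γ => (f.coeff γ : ℝ)) = deltaOne) :
    ∃ h : MonoidAlgebra ℤ Γ, Lopsided (h * f) := by
  obtain ⟨w, hw, -, hwf⟩ := hinv
  have hf : Summable fun γ => |(f.coeff γ : ℝ)| := summable_abs_intCast_finsupp f.coeff
  set F := ∑' γ, |(f.coeff γ : ℝ)|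
  have hF : 0 ≤ F := tsum_nonneg fun _ => abs_nonneg _
  obtain ⟨q, h, hq, he, hE⟩ :=
    exists_finsupp_int_tsum_abs_sub_lt hw (ε := 1 / (F + 1)) (by positivity)
  refine ⟨⟨h⟩, lopsided_of_sum_abs_sub_smul_deltaOne_lt _ q fun T => ?_⟩
  have hconv : conv (fun γ => (h γ : ℝ) - q * w γ) (fun γ => (f.coeff γ : ℝ)) =
      (fun γ => ((⟨h⟩ * f : MonoidAlgebra ℤ Γ).coeff γ : ℝ)) - (q : ℝ) • deltaOne := by
    rw [intCast_coeff_mul_eq_conv, ← hwf, ← conv_smul_left]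
    exact conv_sub_left (summable_abs_intCast_finsupp h) (hw.mul_left (q : ℝ)).abs hf
  calc ∑ γ ∈ T, |((⟨h⟩ * f : MonoidAlgebra ℤ Γ).coeff γ : ℝ) - q * deltaOne γ|
      = ∑ γ ∈ T, |conv (fun γ => (h γ : ℝ) - q * w γ) (fun γ => (f.coeff γ : ℝ)) γ| := by
        rw [hconv]
        rfl
    _ ≤ (∑' γ, |(h γ : ℝ) - q * w γ|) * F := sum_abs_conv_le he hf T
    _ ≤ q * (1 / (F + 1)) * F := mul_le_mul_of_nonneg_right hE.le hF
    _ < q := by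
        rw [mul_one_div, div_mul_eq_mul_div, div_lt_iff₀ (by positivity)]
        nlinarith [(Nat.cast_pos (α := ℝ)).2 hq]

/-- If `f ∈ ℤ[Γ]` is invertible in `ℓ¹(Γ, ℝ)`, then the left ideal `ℤ[Γ]·f`
contains a lopsided element. -/
theorem exists_lopsided_of_invertible {Γ : Type*} [Group Γ] [Countable Γ] [Infinite Γ]
    [DecidableEq Γ] (f : MonoidAlgebra ℤ Γ)
    (hinv : ∃ w : Γ → ℝ, Summable w ∧
      conv (fun γ => (f.coeff γ : ℝ)) w = deltaOne ∧
      conv w (fun γ => (f.coeff γ : ℝ)) = deltaOne) :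
    ∃ h : MonoidAlgebra ℤ Γ, Lopsided (h * f) :=
  exists_lopsided_of_invertible_general f hinv
end

section
/- Let n ≥ k ≥ 1 and p ≥ 1 be integers such that A(q) := [n choose k]_q · (1 − q)/(1 − q^p) is a polynomial in q. Then A(q) has nonnegative integer coefficients. -/
/-!
Write `[n choose k]_q = ∑ c_j q^j` and `d = k (n - k)`. Comparing coefficients in
`A(q) (1 - q^p) = [n choose k]_q (1 - q)` gives `a_j - a_{j-p} = c_j - c_{j-1}` (indices below `0`
contribute `0`). Since `(c_j)` is unimodal with its peak at `d/2`, the right side is nonnegative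
for `j ≤ d/2` and nonpositive beyond. Hence `a_j ≥ 0` for `j ≤ d/2` by induction upwards in steps
of `p`, and, as `A` has only finitely many nonzero coefficients, for `j ≥ d/2` by induction
downwards.

Unimodality is Proctor's `sl₂` argument. The coefficient `c_j` counts the `k`-subsets of
`{0, …, n-1}` with sum `j + k(k-1)/2`. Moving an element `i` to `i + 1`, with weight
`√((i+1)(n-1-i))`, defines a raising operator `E` whose adjoint `F` satisfies
`EF - FE = 2s + k - kn` on subsets with sum `s`. Below the middle level this scalar is negative, so
`‖Ef‖² = ‖Ff‖² + (kn - k - 2s) ‖f‖²` makes `E` injective there. The reflection `i ↦ n - 1 - i`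
gives the decreasing half.
-/

open Polynomial

/-- The Gaussian (q-)binomial coefficient as a polynomial in `q`. -/
noncomputable def gaussBinom : ℕ → ℕ → Polynomial ℤ
  | _, 0 => 1
  | 0, _ + 1 => 0
  | n + 1, k + 1 => gaussBinom n k + Polynomial.X ^ (k + 1) * gaussBinom n (k + 1)

open Finset

section

variable {R : Type*} [CommRing R] {A G : R[X]} {p m : ℕ}

theorem coeff_succ_sub_of_mul_one_sub_X_pow_eq (hA : A * (1 - X ^ p) = G * (1 - X)) (j : ℕ) :
    A.coeff (j + 1) - (if p ≤ j + 1 then A.coeff (j + 1 - p) else 0) =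
      G.coeff (j + 1) - G.coeff j := by
  simpa [mul_one_sub, coeff_mul_X_pow'] using congrArg (coeff · (j + 1)) hA

theorem coeff_zero_of_mul_one_sub_X_pow_eq (hp : 0 < p) (hA : A * (1 - X ^ p) = G * (1 - X)) :
    A.coeff 0 = G.coeff 0 := by
  simpa [mul_one_sub, coeff_mul_X_pow', hp.ne] using congrArg (coeff · 0) hA

variable [PartialOrder R] [IsOrderedAddMonoid R]

theorem coeff_nonneg_of_mul_one_sub_X_pow_eq_of_le (hp : 0 < p)
    (hA : A * (1 - X ^ p) = G * (1 - X)) (h0 : 0 ≤ G.coeff 0)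
    (hG : ∀ j < m, G.coeff j ≤ G.coeff (j + 1)) : ∀ j ≤ m, 0 ≤ A.coeff j := by
  intro j
  induction j using Nat.strong_induction_on with
  | _ j ih =>
    intro hj
    rcases j with _ | j
    · rwa [coeff_zero_of_mul_one_sub_X_pow_eq hp hA]
    have hprev : 0 ≤ if p ≤ j + 1 then A.coeff (j + 1 - p) else 0 := by
      split_ifs
      · exact ih _ (by omega) (by omega)
      · rfl
    rw [sub_eq_iff_eq_add'.1 (coeff_succ_sub_of_mul_one_sub_X_pow_eq hA j)]
    exact add_nonneg hprev (sub_nonneg.2 (hG j (by omega)))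

theorem coeff_nonneg_of_mul_one_sub_X_pow_eq_of_ge (hp : 0 < p)
    (hA : A * (1 - X ^ p) = G * (1 - X))
    (hG : ∀ j ≥ m, G.coeff (j + 1) ≤ G.coeff j) : ∀ j ≥ m, 0 ≤ A.coeff j := by
  intro j
  induction hd : A.natDegree + 1 - j using Nat.strong_induction_on generalizing j with
  | _ d ih =>
    intro hj
    by_cases hdeg : A.natDegree < j
    · rw [coeff_eq_zero_of_natDegree_lt hdeg]
    have hrec := coeff_succ_sub_of_mul_one_sub_X_pow_eq hA (j + p - 1)
    rw [if_pos (by omega), Nat.sub_add_cancel (by omega), Nat.add_sub_cancel] at hrec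
    have hstep := hG (j + p - 1) (by omega)
    rw [Nat.sub_add_cancel (by omega)] at hstep
    rw [show A.coeff j = A.coeff (j + p) + (G.coeff (j + p - 1) - G.coeff (j + p)) by
      linear_combination -hrec]
    exact add_nonneg (ih _ (by omega) (j + p) rfl (by omega)) (sub_nonneg.2 hstep)

end

theorem X_pow_choose_two_mul_gaussBinom (n k : ℕ) :
    X ^ k.choose 2 * gaussBinom n k =
      ∑ S ∈ (range n).powersetCard k, (X : ℤ[X]) ^ ∑ i ∈ S, i := by
  induction n generalizing k with
  | zero =>
    rcases k with _ | k
    · simp [gaussBinom]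
    · simp [gaussBinom, powersetCard_eq_empty.2 (by simp : #(∅ : Finset ℕ) < k + 1)]
  | succ n ih =>
    cases k with
    | zero => cases n <;> simp [gaussBinom]
    | succ k =>
      set shift := addRightEmbedding 1
      have hrange : range (n + 1) = insert 0 ((range n).map shift) := by
        ext (_ | _) <;> simp [shift]
      have h0 : 0 ∉ (range n).map shift := by simp [shift]
      have hsum {m : ℕ} {S : Finset ℕ} (hS : S ∈ (range n).powersetCard m) :
          ∑ i ∈ S.map shift, i = ∑ i ∈ S, i + m := by
        simp [shift, sum_add_distrib, (mem_powersetCard.1 hS).2]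
      have hshift : ∀ S ∈ (range n).powersetCard (k + 1),
          (X : ℤ[X]) ^ ∑ i ∈ S.map shift, i = X ^ (k + 1) * X ^ ∑ i ∈ S, i := by
        intro S hS
        rw [hsum hS, pow_add, mul_comm]
      have hinsert : ∀ S ∈ (range n).powersetCard k,
          (X : ℤ[X]) ^ ∑ i ∈ insert 0 (S.map shift), i = X ^ k * X ^ ∑ i ∈ S, i := by
        intro S hS
        rw [sum_insert (by simp [shift]), zero_add, hsum hS, pow_add, mul_comm]
      rw [hrange, powersetCard_succ_insert h0, sum_union, sum_image, powersetCard_map,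
        powersetCard_map, sum_map, sum_map]
      · simp only [mapEmbedding_apply, RelEmbedding.coe_toEmbedding]
        rw [sum_congr rfl hshift, sum_congr rfl hinsert, ← mul_sum, ← mul_sum, ← ih, ← ih,
          gaussBinom, Nat.choose_succ_succ', Nat.choose_one_right]
        ring
      · intro S hS T hT hST
        have h0S : 0 ∉ S := fun h => h0 ((mem_powersetCard.1 hS).1 h)
        have h0T : 0 ∉ T := fun h => h0 ((mem_powersetCard.1 hT).1 h)
        simpa [erase_insert h0S, erase_insert h0T] using congrArg (erase · 0) hST
      · refine disjoint_left.2 fun S hS hS' => h0 ?_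
        obtain ⟨T, -, rfl⟩ := mem_image.1 hS'
        exact (mem_powersetCard.1 hS).1 (mem_insert_self 0 T)

def subsetsWithSum (n k s : ℕ) : Finset (Finset ℕ) :=
  ((range n).powersetCard k).filter fun S => ∑ i ∈ S, i = s

section subsetsWithSum

variable {n k s : ℕ} {S : Finset ℕ}

theorem mem_subsetsWithSum :
    S ∈ subsetsWithSum n k s ↔ S ⊆ range n ∧ #S = k ∧ ∑ i ∈ S, i = s := by
  simp [subsetsWithSum, mem_powersetCard, and_assoc]

theorem coeff_gaussBinom (n k j : ℕ) :
    (gaussBinom n k).coeff j = #(subsetsWithSum n k (j + k.choose 2)) := by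
  rw [← coeff_X_pow_mul, X_pow_choose_two_mul_gaussBinom, finsetSum_coeff]
  simp [coeff_X_pow, subsetsWithSum, @eq_comm _ (j + _)]

theorem sum_le_card_mul_of_subset_range (hS : S ⊆ range n) : ∑ i ∈ S, i ≤ #S * (n - 1) := by
  refine (sum_le_card_nsmul S id (n - 1) fun i hi => ?_).trans_eq (smul_eq_mul _ _)
  have := mem_range.1 (hS hi)
  simp only [id_eq]
  omega

theorem image_sub_image_sub_of_subset_range (hS : S ⊆ range n) :
    (S.image (n - 1 - ·)).image (n - 1 - ·) = S := by
  rw [image_image]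
  conv_rhs => rw [← image_id (s := S)]
  refine image_congr fun i hi => ?_
  have := mem_range.1 (hS hi)
  simp only [Function.comp_apply, id_eq]
  omega

theorem image_sub_mem_subsetsWithSum (hS : S ∈ subsetsWithSum n k s) :
    S.image (n - 1 - ·) ∈ subsetsWithSum n k (k * (n - 1) - s) := by
  obtain ⟨hsub, hcard, hsum⟩ := mem_subsetsWithSum.1 hS
  have hlt (i) (hi : i ∈ S) : i < n := mem_range.1 (hsub hi)
  have hinj : Set.InjOn (n - 1 - ·) S := fun a ha b hb hab => by
    have := hlt a ha
    have := hlt b hb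
    simp only at hab
    omega
  have hsum' : ∑ i ∈ S, (n - 1 - i) + ∑ i ∈ S, i = k * (n - 1) := by
    rw [← sum_add_distrib, sum_congr rfl fun i hi => Nat.sub_add_cancel (by grind [hlt i hi]),
      sum_const, hcard, smul_eq_mul]
  refine mem_subsetsWithSum.2 ⟨fun x hx => ?_, by rw [card_image_of_injOn hinj, hcard], ?_⟩
  · obtain ⟨i, hi, rfl⟩ := mem_image.1 hx
    have := hlt i hi
    exact mem_range.2 (by omega)
  · rw [sum_image hinj]
    omega

theorem card_subsetsWithSum_sub (hs : s ≤ k * (n - 1)) :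
    #(subsetsWithSum n k (k * (n - 1) - s)) = #(subsetsWithSum n k s) := by
  refine card_nbij' (image (n - 1 - ·)) (image (n - 1 - ·)) (fun S hS => ?_)
    (fun S hS => image_sub_mem_subsetsWithSum hS) (fun S hS => ?_) (fun S hS => ?_)
  · simpa [Nat.sub_sub_self hs] using image_sub_mem_subsetsWithSum hS
  · exact image_sub_image_sub_of_subset_range (mem_subsetsWithSum.1 hS).1
  · exact image_sub_image_sub_of_subset_range (mem_subsetsWithSum.1 hS).1

end subsetsWithSum

namespace SubsetSl2

def swapSucc (i : ℕ) (S : Finset ℕ) : Finset ℕ :=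
  S.map (Equiv.swap i (i + 1)).toEmbedding

variable {n k s i j : ℕ} {S : Finset ℕ}

@[simp]
theorem mem_swapSucc {x : ℕ} : x ∈ swapSucc i S ↔ Equiv.swap i (i + 1) x ∈ S := by
  simp [swapSucc, mem_map_equiv]

@[simp]
theorem swapSucc_swapSucc : swapSucc i (swapSucc i S) = S := by
  ext; simp

theorem swapSucc_subset_range (hin : i + 1 < n) (hS : S ⊆ range n) :
    swapSucc i S ⊆ range n := by
  intro x hx
  have := mem_range.1 (hS (mem_swapSucc.1 hx))
  rw [Equiv.swap_apply_def] at this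
  exact mem_range.2 (by split_ifs at this <;> omega)

theorem swapSucc_mem_subsetsWithSum (hS : S ∈ subsetsWithSum n k s) (hi : i ∈ S)
    (hi' : i + 1 ∉ S) (hin : i + 1 < n) : swapSucc i S ∈ subsetsWithSum n k (s + 1) := by
  obtain ⟨hsub, hcard, hsum⟩ := mem_subsetsWithSum.1 hS
  refine mem_subsetsWithSum.2
    ⟨swapSucc_subset_range hin hsub, by rw [swapSucc, card_map, hcard], ?_⟩
  rw [swapSucc, sum_map, ← add_sum_erase S _ hi, ← hsum, ← add_sum_erase S _ hi]
  have hfix : ∀ x ∈ S.erase i, Equiv.swap i (i + 1) x = x := fun x hx =>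
    Equiv.swap_apply_of_ne_of_ne (ne_of_mem_erase hx) fun h => hi' (h ▸ mem_of_mem_erase hx)
  simp only [Equiv.coe_toEmbedding, Equiv.swap_apply_left, sum_congr rfl hfix]
  omega

noncomputable def raiseAt (i : ℕ) : Module.End ℝ (Finset ℕ → ℝ) :=
  LinearMap.pi fun S => if i + 1 ∈ S ∧ i ∉ S then LinearMap.proj (swapSucc i S) else 0

noncomputable def lowerAt (i : ℕ) : Module.End ℝ (Finset ℕ → ℝ) :=
  LinearMap.pi fun S => if i ∈ S ∧ i + 1 ∉ S then LinearMap.proj (swapSucc i S) else 0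

theorem raiseAt_apply (f : Finset ℕ → ℝ) (S : Finset ℕ) :
    raiseAt i f S = if i + 1 ∈ S ∧ i ∉ S then f (swapSucc i S) else 0 := by
  simp only [raiseAt, LinearMap.pi_apply]
  split_ifs <;> rfl

theorem lowerAt_apply (f : Finset ℕ → ℝ) (S : Finset ℕ) :
    lowerAt i f S = if i ∈ S ∧ i + 1 ∉ S then f (swapSucc i S) else 0 := by
  simp only [lowerAt, LinearMap.pi_apply]
  split_ifs <;> rfl

theorem commute_raiseAt_lowerAt (h : i ≠ j) : Commute (raiseAt i) (lowerAt j) := by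
  refine LinearMap.ext fun f => funext fun S => ?_
  simp only [Module.End.mul_apply, raiseAt_apply, lowerAt_apply, mem_swapSucc]
  rcases eq_or_ne j (i + 1) with rfl | h1
  · simp only [Equiv.swap_apply_left, Equiv.swap_apply_right]
    split_ifs <;> first | rfl | tauto
  rcases eq_or_ne i (j + 1) with rfl | h2
  · simp only [Equiv.swap_apply_left, Equiv.swap_apply_right]
    split_ifs <;> first | rfl | tauto
  have hcomm : swapSucc j (swapSucc i S) = swapSucc i (swapSucc j S) := by
    ext x
    simp only [mem_swapSucc, Equiv.swap_apply_def]
    split_ifs <;> first | omega | rfl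
  rw [hcomm, Equiv.swap_apply_of_ne_of_ne h.symm h1,
    Equiv.swap_apply_of_ne_of_ne (by omega) (by omega),
    Equiv.swap_apply_of_ne_of_ne (by omega) (by omega), Equiv.swap_apply_of_ne_of_ne h (by omega)]
  split_ifs <;> rfl

theorem raiseAt_mul_lowerAt_sub_apply (f : Finset ℕ → ℝ) (S : Finset ℕ) :
    (raiseAt i * lowerAt i - lowerAt i * raiseAt i) f S =
      ((if i + 1 ∈ S then 1 else 0) - (if i ∈ S then 1 else 0)) * f S := by
  simp only [LinearMap.sub_apply, Module.End.mul_apply, Pi.sub_apply, raiseAt_apply,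
    lowerAt_apply, mem_swapSucc, Equiv.swap_apply_left, Equiv.swap_apply_right, swapSucc_swapSucc]
  by_cases i + 1 ∈ S <;> by_cases i ∈ S <;> simp [*]

/- `weight n i ^ 2 = (i + 1) * (n - 1 - i)` is what makes the commutator of `raise n` and `lower n`
diagonal (see `sum_weight_sq_mul`); splitting it as a square lets both operators carry the same
weights, so that they are adjoint. -/
noncomputable def weight (n i : ℕ) : ℝ := √((i + 1) * (n - 1 - i : ℝ))

theorem weight_sq (hi : i < n) : weight n i ^ 2 = (i + 1) * (n - 1 - i : ℝ) := by
  have : (i : ℝ) + 1 ≤ n := by exact_mod_cast hi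
  exact Real.sq_sqrt (by nlinarith)

theorem lt_of_weight_ne_zero (h : weight n i ≠ 0) : i + 1 < n := by
  have hpos := Real.sqrt_ne_zero'.1 h
  have : (0 : ℝ) < n - 1 - i := pos_of_mul_pos_right hpos (by positivity)
  exact_mod_cast (by linarith : (i : ℝ) + 1 < n)

noncomputable def raise (n : ℕ) : Module.End ℝ (Finset ℕ → ℝ) :=
  ∑ i ∈ range n, weight n i • raiseAt i

noncomputable def lower (n : ℕ) : Module.End ℝ (Finset ℕ → ℝ) :=
  ∑ i ∈ range n, weight n i • lowerAt i

theorem raise_mul_lower_sub (n : ℕ) :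
    raise n * lower n - lower n * raise n =
      ∑ i ∈ range n, weight n i ^ 2 • (raiseAt i * lowerAt i - lowerAt i * raiseAt i) := by
  simp only [raise, lower, sum_mul_sum, smul_mul_smul_comm]
  nth_rw 2 [sum_comm]
  rw [← sum_sub_distrib]
  refine sum_congr rfl fun i hi => ?_
  rw [← sum_sub_distrib, sum_eq_single i]
  · rw [sq, smul_sub]
  · intro j _ hji
    rw [(commute_raiseAt_lowerAt hji.symm).eq, mul_comm (weight n j), sub_self]
  · exact fun h => absurd hi h

theorem sum_weight_sq_mul (hS : S ⊆ range n) :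
    ∑ i ∈ range n, weight n i ^ 2 * ((if i + 1 ∈ S then 1 else 0) - (if i ∈ S then 1 else 0)) =
      2 * ∑ i ∈ S, (i : ℝ) + #S - #S * n := by
  set g : ℕ → ℝ := fun m => if m ∈ S then m * (n - m : ℝ) else 0
  have hterm : ∀ i ∈ range n,
      weight n i ^ 2 * ((if i + 1 ∈ S then 1 else 0) - (if i ∈ S then 1 else 0)) =
        (g (i + 1) - g i) + if i ∈ S then 2 * (i : ℝ) + 1 - n else 0 := by
    intro i hi
    rw [weight_sq (mem_range.1 hi)]
    simp only [g]
    split_ifs <;> push_cast <;> ring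
  rw [sum_congr rfl hterm, sum_add_distrib, sum_range_sub, sum_ite_mem, inter_eq_right.2 hS]
  simp [g, sum_add_distrib, sum_sub_distrib, mul_sum]

theorem raise_mul_lower_sub_apply (f : Finset ℕ → ℝ) (hS : S ⊆ range n) :
    (raise n * lower n - lower n * raise n) f S = (2 * ∑ i ∈ S, (i : ℝ) + #S - #S * n) * f S := by
  rw [raise_mul_lower_sub, ← sum_weight_sq_mul hS, sum_mul]
  simp only [LinearMap.sum_apply, Finset.sum_apply, LinearMap.smul_apply, Pi.smul_apply,
    raiseAt_mul_lowerAt_sub_apply, smul_eq_mul, mul_assoc]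


theorem sum_raiseAt_mul (hi : i + 1 < n) (f g : Finset ℕ → ℝ) :
    ∑ S ∈ (range n).powerset, raiseAt i f S * g S =
      ∑ S ∈ (range n).powerset, f S * lowerAt i g S := by
  have hmaps : ∀ S ∈ (range n).powerset, swapSucc i S ∈ (range n).powerset := fun S hS =>
    mem_powerset.2 (swapSucc_subset_range hi (mem_powerset.1 hS))
  refine sum_nbij' (swapSucc i) (swapSucc i) hmaps hmaps (fun _ _ => swapSucc_swapSucc)
    (fun _ _ => swapSucc_swapSucc) fun S _ => ?_
  simp only [raiseAt_apply, lowerAt_apply, mem_swapSucc, Equiv.swap_apply_left,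
    Equiv.swap_apply_right, swapSucc_swapSucc]
  split_ifs <;> simp

def pairing (n : ℕ) (f g : Finset ℕ → ℝ) : ℝ :=
  ∑ S ∈ (range n).powerset, f S * g S

theorem pairing_raise (f g : Finset ℕ → ℝ) :
    pairing n (raise n f) g = pairing n f (lower n g) := by
  simp only [pairing, raise, lower, LinearMap.sum_apply, Finset.sum_apply, LinearMap.smul_apply,
    Pi.smul_apply, smul_eq_mul, sum_mul, mul_sum]
  rw [sum_comm]
  conv_rhs => rw [sum_comm]
  refine sum_congr rfl fun i _ => ?_
  by_cases hw : weight n i = 0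
  · simp [hw]
  · simp only [mul_assoc, mul_left_comm (f _), ← mul_sum]
    rw [sum_raiseAt_mul (lt_of_weight_ne_zero hw)]

theorem support_raise_subset {f : Finset ℕ → ℝ}
    (hf : Function.support f ⊆ subsetsWithSum n k s) :
    Function.support (raise n f) ⊆ subsetsWithSum n k (s + 1) := by
  intro S hS
  simp only [Function.mem_support, raise, LinearMap.sum_apply, Finset.sum_apply,
    LinearMap.smul_apply, Pi.smul_apply, smul_eq_mul] at hS
  obtain ⟨i, -, hi⟩ := exists_ne_zero_of_sum_ne_zero hS
  have hin := lt_of_weight_ne_zero (left_ne_zero_of_mul hi)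
  have hraise := right_ne_zero_of_mul hi
  rw [raiseAt_apply] at hraise
  split_ifs at hraise with hcond
  swap; · exact absurd rfl hraise
  have hmem := swapSucc_mem_subsetsWithSum (hf hraise) (by simp [hcond.1]) (by simp [hcond.2]) hin
  rwa [swapSucc_swapSucc] at hmem

theorem pairing_raise_self {f : Finset ℕ → ℝ} (hf : Function.support f ⊆ subsetsWithSum n k s) :
    pairing n (raise n f) (raise n f) =
      pairing n (lower n f) (lower n f) + (k * n - k - 2 * s) * pairing n f f := by
  have hcomm : pairing n f ((raise n * lower n - lower n * raise n) f) =
      (2 * s + k - k * n) * pairing n f f := by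
    rw [pairing, pairing, mul_sum]
    refine sum_congr rfl fun S hS => ?_
    rw [raise_mul_lower_sub_apply f (mem_powerset.1 hS)]
    by_cases hfS : f S = 0
    · simp [hfS]
    obtain ⟨-, hcard, hsum⟩ := mem_subsetsWithSum.1 (hf hfS)
    rw [hcard, ← hsum]
    push_cast
    ring
  have hEF : pairing n f (raise n (lower n f)) = pairing n (lower n f) (lower n f) := by
    rw [← pairing_raise]
    simp only [pairing, mul_comm]
  have hFE := pairing_raise (n := n) f (raise n f)
  simp only [pairing, LinearMap.sub_apply, Module.End.mul_apply, Pi.sub_apply, mul_sub,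
    sum_sub_distrib] at hcomm hEF hFE ⊢
  linarith

theorem eq_zero_of_raise_eq_zero (h : 2 * s < k * (n - 1)) {f : Finset ℕ → ℝ}
    (hf : Function.support f ⊆ subsetsWithSum n k s) (hraise : raise n f = 0) : f = 0 := by
  have hpos : (0 : ℝ) < k * n - k - 2 * s := by
    have hn : 1 ≤ n := by
      rcases n with _ | n
      · simp at h
      · omega
    have : ((2 * s : ℕ) : ℝ) < (k * (n - 1) : ℕ) := by exact_mod_cast h
    push_cast [Nat.cast_sub hn] at this
    linarith
  have hff : ∑ S ∈ (range n).powerset, f S * f S = 0 := by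
    have hsq := pairing_raise_self hf
    have hF : 0 ≤ pairing n (lower n f) (lower n f) := sum_nonneg fun _ _ => mul_self_nonneg _
    have hG : 0 ≤ pairing n f f := sum_nonneg fun _ _ => mul_self_nonneg _
    simp only [pairing, hraise, Pi.zero_apply, mul_zero, sum_const_zero] at hsq hF hG
    nlinarith
  funext S
  by_contra hS
  have hSL := mem_subsetsWithSum.1 (hf hS)
  exact hS (mul_self_eq_zero.1 ((sum_eq_zero_iff_of_nonneg fun _ _ => mul_self_nonneg _).1 hff S
    (mem_powerset.2 hSL.1)))

theorem _root_.card_subsetsWithSum_le_succ (h : 2 * s < k * (n - 1)) :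
    #(subsetsWithSum n k s) ≤ #(subsetsWithSum n k (s + 1)) := by
  set L := subsetsWithSum n k s
  set L' := subsetsWithSum n k (s + 1)
  let T : (L → ℝ) →ₗ[ℝ] (L' → ℝ) := LinearMap.funLeft ℝ ℝ Subtype.val ∘ₗ raise n ∘ₗ
    Function.ExtendByZero.linearMap ℝ Subtype.val
  suffices Function.Injective T by
    simpa using LinearMap.finrank_le_finrank_of_injective this
  rw [← LinearMap.ker_eq_bot, LinearMap.ker_eq_bot']
  intro f hf
  set g := Function.extend (Subtype.val : L → Finset ℕ) f 0
  have hg : Function.support g ⊆ L := fun S hS => by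
    by_contra hSL
    exact hS (Function.extend_apply' _ _ _ fun ⟨a, ha⟩ => hSL (ha ▸ a.2))
  have hraise : raise n g = 0 := funext fun S => by
    by_cases hS : S ∈ L'
    · exact congrFun hf ⟨S, hS⟩
    · exact Function.notMem_support.1 fun h => hS (support_raise_subset hg h)
  funext S
  rw [← Subtype.val_injective.extend_apply f 0 S]
  exact congrFun (eq_zero_of_raise_eq_zero h hg hraise) S

end SubsetSl2

theorem Nat.mul_sub_add_two_mul_choose_two {n k : ℕ} (hkn : k ≤ n) :
    k * (n - k) + 2 * k.choose 2 = k * (n - 1) := by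
  rw [Nat.choose_two_right, Nat.mul_div_cancel' (Nat.even_mul_pred_self k).two_dvd, ← Nat.mul_add]
  rcases k with _ | k
  · simp
  · congr 1
    omega

theorem card_subsetsWithSum_succ_le {n k s : ℕ} (h : k * (n - 1) ≤ 2 * s + 1) :
    #(subsetsWithSum n k (s + 1)) ≤ #(subsetsWithSum n k s) := by
  by_cases hs : s + 1 ≤ k * (n - 1)
  · rw [← card_subsetsWithSum_sub hs, ← card_subsetsWithSum_sub (by omega : s ≤ k * (n - 1))]
    convert card_subsetsWithSum_le_succ (n := n) (k := k) (s := k * (n - 1) - (s + 1))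
      (by omega) using 3
    omega
  · rw [card_eq_zero.2 (eq_empty_of_forall_notMem fun S hS => hs ?_)]
    · exact Nat.zero_le _
    obtain ⟨hsub, hcard, hsum⟩ := mem_subsetsWithSum.1 hS
    exact hsum ▸ hcard ▸ sum_le_card_mul_of_subset_range hsub

theorem gaussBinom_coeff_nonneg (n k j : ℕ) : 0 ≤ (gaussBinom n k).coeff j := by
  rw [coeff_gaussBinom]
  positivity

theorem gaussBinom_coeff_le_coeff_succ {n k j : ℕ} (hkn : k ≤ n) (hj : 2 * j < k * (n - k)) :
    (gaussBinom n k).coeff j ≤ (gaussBinom n k).coeff (j + 1) := by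
  rw [coeff_gaussBinom, coeff_gaussBinom, add_right_comm]
  have := Nat.mul_sub_add_two_mul_choose_two hkn
  exact_mod_cast card_subsetsWithSum_le_succ (by omega)

theorem gaussBinom_coeff_succ_le_coeff {n k j : ℕ} (hkn : k ≤ n) (hj : k * (n - k) ≤ 2 * j + 1) :
    (gaussBinom n k).coeff (j + 1) ≤ (gaussBinom n k).coeff j := by
  rw [coeff_gaussBinom, coeff_gaussBinom, add_right_comm]
  have := Nat.mul_sub_add_two_mul_choose_two hkn
  exact_mod_cast card_subsetsWithSum_succ_le (by omega)

theorem gaussBinom_quotient_nonneg_general (n k p : ℕ) (hkn : k ≤ n) (hp : 1 ≤ p)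
    (A : Polynomial ℤ)
    (hA : A * (1 - Polynomial.X ^ p) = gaussBinom n k * (1 - Polynomial.X)) :
    ∀ j : ℕ, 0 ≤ A.coeff j := by
  intro j
  rcases le_total j (k * (n - k) / 2) with hj | hj
  · exact coeff_nonneg_of_mul_one_sub_X_pow_eq_of_le hp hA (gaussBinom_coeff_nonneg n k 0)
      (fun i hi => gaussBinom_coeff_le_coeff_succ hkn (by omega)) j hj
  · exact coeff_nonneg_of_mul_one_sub_X_pow_eq_of_ge hp hA
      (fun i hi => gaussBinom_coeff_succ_le_coeff hkn (by omega)) j hj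

/-- If `n ≥ k ≥ 1`, `p ≥ 1` and `A(q) = [n choose k]_q (1 − q)/(1 − q^p)` is a
polynomial, then `A(q)` has nonnegative integer coefficients. -/
theorem gaussBinom_quotient_nonneg (n k p : ℕ) (hk : 1 ≤ k) (hkn : k ≤ n) (hp : 1 ≤ p)
    (A : Polynomial ℤ)
    (hA : A * (1 - Polynomial.X ^ p) = gaussBinom n k * (1 - Polynomial.X)) :
    ∀ j : ℕ, 0 ≤ A.coeff j :=
  gaussBinom_quotient_nonneg_general n k p hkn hp A hA
end

section
/- The Gaussian binomial coefficient factors as a product of cyclotomic polynomials: [n choose k]_q = Π_{j=2}^{n} Φ_j(q)^{⌊n/j⌋ − ⌊k/j⌋ − ⌊(n−k)/j⌋}, where each exponent ⌊n/j⌋ − ⌊k/j⌋ − ⌊(n−k)/j⌋ is either 0 or 1. -/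
open scoped BigOperators
open Polynomial

/-!
Clearing denominators, `[a+b choose a]_q · [a]_q! · [b]_q! = [a+b]_q!`, which follows from the
`q`-Pascal recursion. Each `q`-integer `[i]_q = 1 + q + ⋯ + q^(i-1)` is the product of the `Φ_d`
over the divisors `d > 1` of `i`, so `Φ_j` occurs in `[n]_q!` with multiplicity `⌊n/j⌋`, the number
of multiples of `j` in `[1, n]`. Cancelling in the domain `ℤ[X]` leaves the exponent
`⌊(a+b)/j⌋ - ⌊a/j⌋ - ⌊b/j⌋`, which is `0` or `1` because `⌊x⌋ + ⌊y⌋ ≤ ⌊x+y⌋ ≤ ⌊x⌋ + ⌊y⌋ + 1`.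
-/

lemma geom_sum_range_add {R : Type*} [Semiring R] (x : R) (m n : ℕ) :
    ∑ i ∈ Finset.range (m + n), x ^ i =
      ∑ i ∈ Finset.range m, x ^ i + x ^ m * ∑ i ∈ Finset.range n, x ^ i := by
  simp only [Finset.sum_range_add, Finset.mul_sum, pow_add]

noncomputable def qFactorial (R : Type*) [CommRing R] (n : ℕ) : R[X] :=
  ∏ i ∈ Finset.Icc 1 n, ∑ j ∈ Finset.range i, (X : R[X]) ^ j

section qFactorial

variable (R : Type*) [CommRing R]

@[simp]
lemma qFactorial_zero : qFactorial R 0 = 1 := rfl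

lemma qFactorial_succ (n : ℕ) :
    qFactorial R (n + 1) = qFactorial R n * ∑ j ∈ Finset.range (n + 1), (X : R[X]) ^ j :=
  Finset.prod_Icc_succ_top (Nat.le_add_left 1 n) _

lemma qFactorial_eq_prod_cyclotomic {n N : ℕ} (hnN : n ≤ N) :
    qFactorial R n = ∏ j ∈ Finset.Icc 2 N, cyclotomic j R ^ (n / j) := by
  have divisors_erase_one {i : ℕ} (hi : i ∈ Finset.Icc 1 n) :
      i.divisors.erase 1 = {j ∈ Finset.Icc 2 N | j ∣ i} := by
    ext d
    simp only [Finset.mem_erase, Nat.mem_divisors, Finset.mem_filter, Finset.mem_Icc] at hi ⊢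
    constructor
    · rintro ⟨hd1, hdi, -⟩
      have hdi' := Nat.le_of_dvd (by omega) hdi
      have hd0 : d ≠ 0 := by rintro rfl; omega
      exact ⟨⟨by omega, by omega⟩, hdi⟩
    · rintro ⟨⟨hd2, -⟩, hdi⟩
      exact ⟨by omega, hdi, by omega⟩
  calc qFactorial R n
      = ∏ i ∈ Finset.Icc 1 n, ∏ j ∈ Finset.Icc 2 N, cyclotomic j R ^ (if j ∣ i then 1 else 0) := by
        refine Finset.prod_congr rfl fun i hi => ?_
        rw [← prod_cyclotomic_eq_geom_sum (Finset.mem_Icc.mp hi).1, divisors_erase_one hi,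
          Finset.prod_filter]
        exact Finset.prod_congr rfl fun j _ => by split_ifs <;> simp
    _ = ∏ j ∈ Finset.Icc 2 N, cyclotomic j R ^ (n / j) := by
        rw [Finset.prod_comm]
        refine Finset.prod_congr rfl fun j _ => ?_
        rw [Finset.prod_pow_eq_pow_sum, ← Finset.card_filter, ← Nat.Ioc_filter_dvd_card_eq_div]
        rfl

end qFactorial

@[simp]
lemma gaussBinom_zero_right (n : ℕ) : gaussBinom n 0 = 1 := by
  cases n <;> rfl

lemma gaussBinom_succ_succ (n k : ℕ) :
    gaussBinom (n + 1) (k + 1) = gaussBinom n k + X ^ (k + 1) * gaussBinom n (k + 1) := rfl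

lemma gaussBinom_eq_zero_of_lt {n k : ℕ} (h : n < k) : gaussBinom n k = 0 := by
  induction n generalizing k with
  | zero => obtain ⟨k, rfl⟩ := Nat.exists_eq_add_one_of_ne_zero (by omega : k ≠ 0); rfl
  | succ n ih =>
    obtain ⟨k, rfl⟩ := Nat.exists_eq_add_one_of_ne_zero (by omega : k ≠ 0)
    rw [gaussBinom_succ_succ, ih (by omega), ih (by omega), mul_zero, add_zero]

@[simp]
lemma gaussBinom_self (n : ℕ) : gaussBinom n n = 1 := by
  induction n with
  | zero => rfl
  | succ n ih =>
    rw [gaussBinom_succ_succ, ih, gaussBinom_eq_zero_of_lt n.lt_succ_self, mul_zero, add_zero]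

/-- The Pascal recursion of `gaussBinom` matches the splitting
`[a+b+2]_q = [a+1]_q + q^(a+1) [b+1]_q` of the last factor of `[a+b+2]_q!`. -/
lemma gaussBinom_add_mul_qFactorial_mul_qFactorial (a b : ℕ) :
    gaussBinom (a + b) a * qFactorial ℤ a * qFactorial ℤ b = qFactorial ℤ (a + b) := by
  induction h : a + b generalizing a b with
  | zero =>
    obtain ⟨rfl, rfl⟩ : a = 0 ∧ b = 0 := by omega
    simp
  | succ m ih =>
    obtain _ | a := a
    · simp [← h]
    obtain _ | b := b
    · simp [← h]
    have ih₁ := ih a (b + 1) (by omega)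
    have ih₂ := ih (a + 1) b (by omega)
    have hsplit := geom_sum_range_add (X : ℤ[X]) (a + 1) (b + 1)
    rw [show a + 1 + (b + 1) = m + 1 by omega] at hsplit
    rw [gaussBinom_succ_succ, qFactorial_succ, qFactorial_succ, qFactorial_succ, hsplit]
    rw [qFactorial_succ] at ih₁ ih₂
    linear_combination (∑ j ∈ Finset.range (a + 1), (X : ℤ[X]) ^ j) * ih₁ +
      (X ^ (a + 1) * ∑ j ∈ Finset.range (b + 1), (X : ℤ[X]) ^ j) * ih₂

lemma Nat.add_div_sub_div_sub_div_le_one (a b c : ℕ) : (a + b) / c - a / c - b / c ≤ 1 := by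
  have := Nat.add_div_le_div_add_div_add_one a b c
  omega

/-- Cyclotomic factorization of the Gaussian binomial coefficient:
`[n choose k]_q = Π_{j=2}^{n} Φ_j(q)^(⌊n/j⌋ − ⌊k/j⌋ − ⌊(n−k)/j⌋)`, where each
exponent is `0` or `1`. -/
theorem gaussBinom_eq_prod_cyclotomic (n k : ℕ) (hkn : k ≤ n) :
    gaussBinom n k =
      ∏ j ∈ Finset.Icc 2 n,
        (Polynomial.cyclotomic j ℤ) ^ (n / j - k / j - (n - k) / j) ∧
    ∀ j ∈ Finset.Icc 2 n, n / j - k / j - (n - k) / j ≤ 1 := by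
  obtain ⟨m, rfl⟩ := Nat.exists_eq_add_of_le hkn
  simp only [Nat.add_sub_cancel_left]
  refine ⟨?_, fun j _ => Nat.add_div_sub_div_sub_div_le_one k m j⟩
  set Φ : ℕ → ℤ[X] := fun j => cyclotomic j ℤ
  have hfac := gaussBinom_add_mul_qFactorial_mul_qFactorial k m
  rw [qFactorial_eq_prod_cyclotomic ℤ (Nat.le_add_right k m),
    qFactorial_eq_prod_cyclotomic ℤ (Nat.le_add_left m k),
    qFactorial_eq_prod_cyclotomic ℤ le_rfl] at hfac
  have hsplit : ∏ j ∈ Finset.Icc 2 (k + m), Φ j ^ ((k + m) / j) =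
      (∏ j ∈ Finset.Icc 2 (k + m), Φ j ^ ((k + m) / j - k / j - m / j)) *
        (∏ j ∈ Finset.Icc 2 (k + m), Φ j ^ (k / j)) *
        ∏ j ∈ Finset.Icc 2 (k + m), Φ j ^ (m / j) := by
    rw [← Finset.prod_mul_distrib, ← Finset.prod_mul_distrib]
    refine Finset.prod_congr rfl fun j _ => ?_
    rw [← pow_add, ← pow_add]
    have := Nat.div_add_div_le_add_div (x := k) (y := m) (z := j)
    congr 1
    omega
  rw [hsplit, mul_assoc, mul_assoc] at hfac
  refine mul_right_cancel₀ (mul_ne_zero ?_ ?_) hfac <;>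
    exact Finset.prod_ne_zero_iff.mpr fun j _ => pow_ne_zero _ (cyclotomic_ne_zero j ℤ)
end

section
/- Let n ≥ k ≥ 1 and let p > k be a prime dividing the binomial coefficient C(n,k). Then ⌊n/p⌋ − ⌊k/p⌋ − ⌊(n−k)/p⌋ = 1, and consequently [n choose k]_q · (1 − q)/(1 − q^p) is a polynomial in q. -/
open Polynomial
open Finset

/-- q-"factorial" product ∏_{i=1}^m (X^i - 1). -/
noncomputable def qf (m : ℕ) : Polynomial ℤ := ∏ i ∈ Finset.range m, (X ^ (i + 1) - 1)

lemma qf_zero : qf 0 = 1 := by simp [qf]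

lemma qf_succ (m : ℕ) : qf (m + 1) = qf m * (X ^ (m + 1) - 1) := by
  rw [qf, qf, Finset.prod_range_succ]

lemma gb_zero : ∀ n k, n < k → gaussBinom n k = 0
  | _, 0, h => absurd h (Nat.not_lt_zero _)
  | 0, _ + 1, _ => rfl
  | n + 1, k + 1, h => by
    rw [gaussBinom, gb_zero n k (by omega), gb_zero n (k + 1) (by omega), mul_zero, add_zero]

lemma gb_mul : ∀ n k, k ≤ n → gaussBinom n k * (qf k * qf (n - k)) = qf n
  | _, 0, _ => by simp [gaussBinom, qf]
  | 0, _ + 1, h => absurd h (by omega)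
  | n + 1, k + 1, h => by
    rw [gaussBinom, add_mul]
    rcases Nat.lt_or_ge n (k + 1) with hnk | hnk
    · -- k = n
      obtain rfl : n = k := by omega
      rw [gb_zero n (n + 1) (by omega), mul_zero, zero_mul, add_zero,
        (by omega : n + 1 - (n + 1) = 0), qf_zero, mul_one, qf_succ]
      have hkk : gaussBinom n n * qf n = qf n := by
        have := gb_mul n n le_rfl
        rwa [Nat.sub_self, qf_zero, mul_one] at this
      rw [← mul_assoc, hkk]
    · have h1 : gaussBinom n k * (qf k * qf (n - k)) = qf n := gb_mul n k (by omega)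
      have h2 : gaussBinom n (k + 1) * (qf (k + 1) * qf (n - (k + 1))) = qf n :=
        gb_mul n (k + 1) hnk
      have hs2 : qf (n - k) = qf (n - (k + 1)) * (X ^ (n - k) - 1) := by
        have h3 : n - k = (n - (k + 1)) + 1 := by omega
        rw [h3, qf_succ, ← h3]
      rw [(by omega : n + 1 - (k + 1) = n - k)]
      have hx : (X : Polynomial ℤ) ^ (k + 1) * X ^ (n - k) = X ^ (n + 1) := by
        rw [← pow_add]; congr 1; omega
      calc gaussBinom n k * (qf (k + 1) * qf (n - k)) +
            X ^ (k + 1) * gaussBinom n (k + 1) * (qf (k + 1) * qf (n - k))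
          = gaussBinom n k * (qf k * qf (n - k)) * (X ^ (k + 1) - 1) +
            X ^ (k + 1) * (gaussBinom n (k + 1) * (qf (k + 1) * qf (n - (k + 1)))
              * (X ^ (n - k) - 1)) := by rw [qf_succ, hs2]; ring
        _ = qf n * (X ^ (k + 1) - 1) + X ^ (k + 1) * (qf n * (X ^ (n - k) - 1)) := by
            rw [h1, h2]
        _ = qf n * (X ^ (k + 1) * X ^ (n - k) - 1) := by ring
        _ = qf n * (X ^ (n + 1) - 1) := by rw [hx]
        _ = qf (n + 1) := (qf_succ n).symm

section cyc

variable {p : ℕ}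

lemma cyc_prime (hp : p.Prime) : Prime (cyclotomic p ℤ) :=
  (UniqueFactorizationMonoid.irreducible_iff_prime).mp (cyclotomic.irreducible hp.pos)

/-- If `p ∤ N` then `Φ_p ∤ X^N - 1` (for `N ≥ 1`). -/
lemma cyc_not_dvd (hp : p.Prime) {N : ℕ} (hN : 0 < N) (hpN : ¬ p ∣ N) :
    ¬ cyclotomic p ℤ ∣ X ^ N - 1 := by
  intro hdvd
  rw [← prod_cyclotomic_eq_X_pow_sub_one hN ℤ] at hdvd
  obtain ⟨d, hd, hdvd'⟩ := (cyc_prime hp).exists_mem_finset_dvd hdvd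
  have hirr : Irreducible (cyclotomic d ℤ) :=
    cyclotomic.irreducible (Nat.pos_of_mem_divisors hd)
  have hassoc : Associated (cyclotomic p ℤ) (cyclotomic d ℤ) :=
    (cyc_prime hp).associated_of_dvd hirr.prime hdvd'
  have heq : cyclotomic p ℤ = cyclotomic d ℤ :=
    eq_of_monic_of_associated (cyclotomic.monic p ℤ) (cyclotomic.monic d ℤ) hassoc
  have : p = d := cyclotomic_injective heq
  exact hpN (this ▸ Nat.dvd_of_mem_divisors hd)

/-- If `p ∣ N` then `X^N - 1 = Φ_p * h` with `Φ_p ∤ h`. -/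
lemma cyc_dvd_once (hp : p.Prime) {N : ℕ} (hN : 0 < N) (hpN : p ∣ N) :
    ∃ h : Polynomial ℤ, X ^ N - 1 = cyclotomic p ℤ * h ∧ ¬ cyclotomic p ℤ ∣ h := by
  have hpmem : p ∈ N.divisors := Nat.mem_divisors.mpr ⟨hpN, by omega⟩
  have hsplit : (X : Polynomial ℤ) ^ N - 1
      = cyclotomic p ℤ * ∏ d ∈ N.divisors.erase p, cyclotomic d ℤ := by
    rw [← prod_cyclotomic_eq_X_pow_sub_one hN ℤ, ← Finset.mul_prod_erase _ _ hpmem]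
  refine ⟨_, hsplit, ?_⟩
  intro hdvd
  obtain ⟨d, hd, hdvd'⟩ := (cyc_prime hp).exists_mem_finset_dvd hdvd
  have hdne : d ≠ p := (Finset.mem_erase.mp hd).1
  have hirr : Irreducible (cyclotomic d ℤ) :=
    cyclotomic.irreducible (Nat.pos_of_mem_divisors (Finset.mem_of_mem_erase hd))
  have hassoc : Associated (cyclotomic p ℤ) (cyclotomic d ℤ) :=
    (cyc_prime hp).associated_of_dvd hirr.prime hdvd'
  have heq : cyclotomic p ℤ = cyclotomic d ℤ :=
    eq_of_monic_of_associated (cyclotomic.monic p ℤ) (cyclotomic.monic d ℤ) hassoc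
  exact hdne (cyclotomic_injective heq).symm

/-- `qf m = Φ_p ^ (m/p) * g` with `Φ_p ∤ g`. -/
lemma qf_factor (hp : p.Prime) :
    ∀ m : ℕ, ∃ g : Polynomial ℤ, qf m = cyclotomic p ℤ ^ (m / p) * g ∧ ¬ cyclotomic p ℤ ∣ g := by
  intro m
  induction m with
  | zero =>
    exact ⟨1, by simp [qf], fun h => (cyc_prime hp).not_unit (isUnit_of_dvd_one h)⟩
  | succ m ih =>
    obtain ⟨g, hg, hgd⟩ := ih
    by_cases hpm : p ∣ m + 1
    · obtain ⟨h, hh, hhd⟩ := cyc_dvd_once hp (Nat.succ_pos m) hpm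
      refine ⟨g * h, ?_, fun hd => ((cyc_prime hp).dvd_mul.mp hd).elim hgd hhd⟩
      have hdiv : (m + 1) / p = m / p + 1 := by rw [Nat.succ_div, if_pos hpm]
      rw [qf_succ, hg, hh, hdiv]
      ring
    · refine ⟨g * (X ^ (m + 1) - 1), ?_, fun hd => ((cyc_prime hp).dvd_mul.mp hd).elim hgd
        (cyc_not_dvd hp (Nat.succ_pos m) hpm)⟩
      have hdiv : (m + 1) / p = m / p := by rw [Nat.succ_div, if_neg hpm, add_zero]
      rw [qf_succ, hg, hdiv]
      ring

end cyc

/-- If `p > k` is a prime dividing `C(n,k)`, then `⌊n/p⌋ − ⌊k/p⌋ − ⌊(n−k)/p⌋ = 1`,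
and consequently `[n choose k]_q (1 − q)/(1 − q^p)` is a polynomial in `q`. -/
theorem prime_div_choose_gives_poly (n k p : ℕ) (hk : 1 ≤ k) (hkn : k ≤ n)
    (hp : p.Prime) (hpk : k < p) (hdvd : p ∣ n.choose k) :
    n / p - k / p - (n - k) / p = 1 ∧
    ∃ A : Polynomial ℤ,
      A * (1 - Polynomial.X ^ p) = gaussBinom n k * (1 - Polynomial.X) := by
  -- Find a multiple of p in (n-k, n]
  have hdesc : p ∣ n.descFactorial k := by
    rw [Nat.descFactorial_eq_factorial_mul_choose]
    exact Dvd.dvd.mul_left hdvd _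
  rw [Nat.descFactorial_eq_prod_range] at hdesc
  obtain ⟨i, hi, hpi⟩ := (Nat.Prime.prime hp).exists_mem_finset_dvd hdesc
  rw [Finset.mem_range] at hi
  obtain ⟨t, ht⟩ := hpi
  have hp2 := hp.two_le
  have hninpos : 0 < n - i := by omega
  have ht1 : 1 ≤ t := by
    rcases Nat.eq_zero_or_pos t with h | h
    · rw [h, mul_zero] at ht; omega
    · exact h
  obtain ⟨s, rfl⟩ : ∃ s, t = s + 1 := ⟨t - 1, by omega⟩
  set P := p * s with hP
  have ht' : n - i = P + p := by rw [ht, hP]; ring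
  have hmul1 : (s + 1) * p = P + p := by rw [hP]; ring
  have hmul2 : (s + 2) * p = P + p + p := by rw [hP]; ring
  have hmul3 : s * p = P := by rw [hP]; ring
  have e1 : n / p = s + 1 := by
    have h1 : s + 1 ≤ n / p := (Nat.le_div_iff_mul_le (by omega)).mpr (by omega)
    have h2 : n / p < s + 2 := (Nat.div_lt_iff_lt_mul (by omega)).mpr (by omega)
    omega
  have e2 : (n - k) / p = s := by
    have h1 : s ≤ (n - k) / p := (Nat.le_div_iff_mul_le (by omega)).mpr (by omega)
    have h2 : (n - k) / p < s + 1 := (Nat.div_lt_iff_lt_mul (by omega)).mpr (by omega)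
    omega
  have e3 : k / p = 0 := Nat.div_eq_of_lt hpk
  refine ⟨by omega, ?_⟩
  -- polynomial part
  set Φ := cyclotomic p ℤ with hΦ
  obtain ⟨g1, hg1, hg1d⟩ := qf_factor hp k
  obtain ⟨g2, hg2, hg2d⟩ := qf_factor hp (n - k)
  obtain ⟨g3, hg3, hg3d⟩ := qf_factor hp n
  have hmain := gb_mul n k hkn
  rw [hg1, hg2, hg3, e1, e2, e3, pow_zero, one_mul] at hmain
  have hcancel : Φ * g3 = gaussBinom n k * (g1 * g2) := by
    apply mul_left_cancel₀ (pow_ne_zero s (cyc_prime hp).ne_zero)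
    calc Φ ^ s * (Φ * g3) = Φ ^ (s + 1) * g3 := by ring
      _ = gaussBinom n k * (g1 * (Φ ^ s * g2)) := hmain.symm
      _ = Φ ^ s * (gaussBinom n k * (g1 * g2)) := by ring
  have hΦG : Φ ∣ gaussBinom n k := by
    have hd : Φ ∣ gaussBinom n k * (g1 * g2) := ⟨g3, hcancel.symm⟩
    rcases (cyc_prime hp).dvd_mul.mp hd with h | h
    · exact h
    · rcases (cyc_prime hp).dvd_mul.mp h with h | h
      · exact absurd h hg1d
      · exact absurd h hg2d
  obtain ⟨B, hB⟩ := hΦG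
  refine ⟨B, ?_⟩
  haveI : Fact p.Prime := ⟨hp⟩
  have hfact : Φ * (X - 1) = (X : Polynomial ℤ) ^ p - 1 := cyclotomic_prime_mul_X_sub_one ℤ p
  rw [hB]
  calc B * (1 - X ^ p) = -(B * (X ^ p - 1)) := by ring
    _ = -(B * (Φ * (X - 1))) := by rw [hfact]
    _ = Φ * B * (1 - X) := by ring
end

section
/- (q-Vandermonde) For nonnegative integers m, n, k: [m+n choose k]_q = Σ_j [m choose k−j]_q · [n choose j]_q · q^{j(m−k+j)}, where the sum runs over max(0, k−m) ≤ j ≤ min(n, k). -/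
open scoped BigOperators
open Polynomial

/-- The exponent `m + j - k` is truncated, which is harmless: for `j < k - m` the factor
`gaussBinom m (k - j)` vanishes. -/
noncomputable def vandermondeTerm (m n k j : ℕ) : ℤ[X] :=
  gaussBinom m (k - j) * gaussBinom n j * X ^ (j * (m + j - k))

lemma vandermondeTerm_eq_zero {m n k j : ℕ} (h : m < k - j ∨ n < j) :
    vandermondeTerm m n k j = 0 := by
  rcases h with h | h <;> simp [vandermondeTerm, gaussBinom_eq_zero_of_lt h]

lemma vandermondeTerm_add_X_pow_mul {m n k j : ℕ} (hj : j ≤ k) :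
    vandermondeTerm m n k j + X ^ (k + 1) * vandermondeTerm m n (k + 1) j =
      vandermondeTerm (m + 1) n (k + 1) j := by
  obtain ⟨i, rfl⟩ : ∃ i, k = i + j := ⟨k - j, by omega⟩
  have hsub : i + j + 1 - j = i + 1 := by omega
  rw [vandermondeTerm, vandermondeTerm, vandermondeTerm, Nat.add_sub_cancel, hsub,
    gaussBinom_succ_succ]
  rcases le_or_gt (i + 1) m with hi | hi
  · obtain ⟨t, rfl⟩ : ∃ t, m = i + 1 + t := ⟨m - (i + 1), by omega⟩
    have e₁ : i + 1 + t + j - (i + j) = t + 1 := by omega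
    have e₂ : i + 1 + t + j - (i + j + 1) = t := by omega
    have e₃ : i + 1 + t + 1 + j - (i + j + 1) = t + 1 := by omega
    rw [e₁, e₂, e₃]
    ring
  · have e₁ : m + j - (i + j) = 0 := by omega
    have e₂ : m + 1 + j - (i + j + 1) = 0 := by omega
    rw [e₁, e₂, gaussBinom_eq_zero_of_lt hi]
    ring

lemma X_pow_mul_vandermondeTerm_self (m n k : ℕ) :
    X ^ k * vandermondeTerm m n k k = vandermondeTerm (m + 1) n k k := by
  simp only [vandermondeTerm, Nat.sub_self, Nat.add_sub_cancel, gaussBinom_zero_right, one_mul,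
    Nat.mul_succ, pow_add]
  ring

lemma gaussBinom_add_eq_sum_range (m n k : ℕ) :
    gaussBinom (m + n) k = ∑ j ∈ Finset.range (k + 1), vandermondeTerm m n k j := by
  induction m generalizing k with
  | zero =>
    rw [Finset.sum_eq_single_of_mem k (Finset.self_mem_range_succ k)]
    · simp [vandermondeTerm]
    · intro j hj hjk
      exact vandermondeTerm_eq_zero (Or.inl (by simp at hj; omega))
  | succ m ih =>
    cases k with
    | zero => simp [vandermondeTerm]
    | succ k =>
      rw [Nat.add_right_comm, gaussBinom_succ_succ, ih, ih, Finset.sum_range_succ _ (k + 1),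
        mul_add, Finset.mul_sum, ← add_assoc, ← Finset.sum_add_distrib,
        X_pow_mul_vandermondeTerm_self, Finset.sum_range_succ _ (k + 1)]
      congr 1
      refine Finset.sum_congr rfl fun j hj => vandermondeTerm_add_X_pow_mul ?_
      simpa [Nat.lt_succ_iff] using hj

/-- q-Vandermonde identity:
`[m+n choose k]_q = Σ_{j=max(0,k−m)}^{min(n,k)} [m choose k−j]_q [n choose j]_q q^{j(m−k+j)}`. -/
theorem q_vandermonde (m n k : ℕ) :
    gaussBinom (m + n) k =
      ∑ j ∈ Finset.Icc (k - m) (min n k),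
        gaussBinom m (k - j) * gaussBinom n j * Polynomial.X ^ (j * (m + j - k)) := by
  rw [gaussBinom_add_eq_sum_range]
  refine (Finset.sum_subset (fun j hj => ?_) fun j hj hj' => ?_).symm
  · simp only [Finset.mem_Icc, Finset.mem_range] at hj ⊢
    omega
  · simp only [Finset.mem_Icc, Finset.mem_range, not_and_or, not_le] at hj hj'
    exact vandermondeTerm_eq_zero (by omega)
end
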